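/- Let H be a real Hilbert space, let γ > 0 and β ≥ σ > 0. Let f : H → ℝ be differentiable, σ-strongly convex and β-smooth, and let g : H → ℝ be convex and continuous. Let p_f = prox_{γf} and p_g = prox_{γg} be their proximal operators, R_f = 2p_f − Id, R_g = 2p_g − Id the reflected proximal operators, and set δ := max((γβ − 1)/(γβ + 1), (1 − γσ)/(1 + γσ)). Let α ∈ (0, 2/(1+δ)) and define the Douglas–Rachford operator T := (1 − α)·Id + α·(R_g ∘ R_f). Then for every fixed point z̄ of R_g ∘ R_f and every z ∈ H, ‖T(z) − z̄‖ ≤ (|1 − α| + α·δ)·‖z − z̄‖, and |1 − α| + α·δ < 1; consequently the iterates z^{k+1} = T(z^k) converge linearly to z̄ with ‖z^k − z̄‖ ≤ (|1 − α| + α·δ)^k·‖z^0 − z̄‖. -/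

import Mathlib

/-!
Write `d = p_f z - p_f w` and `e = ∇f (p_f z) - ∇f (p_f w)`. Since `p_f y` minimises
`γ f + ½‖· - y‖²` and `f` is smooth, `y = p_f y + γ ∇f (p_f y)`, so `z - w = d + γ e` and
`R_f z - R_f w = d - γ e`. For `σ`-strongly convex, `β`-smooth `f` the interpolation inequality
`‖e‖² + σβ‖d‖² ≤ (σ + β)⟪e, d⟫` (cocoercivity of the convex, `(β - σ)`-smooth `f - σ/2 ‖·‖²`)
forces `σ‖d‖ ≤ ‖e‖ ≤ β‖d‖`; the inequality `‖d - γ e‖² ≤ δ² ‖d + γ e‖²` is then affine in `‖e‖²`,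
so it reduces to the scalar bounds `|1 - γ s| ≤ δ (1 + γ s)` at `s = σ` and `s = β`, which is
where `δ` comes from. Thus `R_f` is `δ`-Lipschitz. The prox of the convex `γ g` is firmly
nonexpansive, so `R_g` is nonexpansive, `R_g ∘ R_f` contracts towards `z̄` by `δ`, and averaging
with the identity gives the factor `|1 - α| + α δ`.
-/

open scoped RealInnerProductSpace
open Filter Topology

theorem nonpos_of_forall_le_mul {a b : ℝ} (h : ∀ t, 0 < t → t ≤ 1 → a ≤ t * b) : a ≤ 0 := by
  have hlim : Tendsto (fun t : ℝ => t * b) (𝓝[>] 0) (𝓝 0) := by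
    simpa using ((tendsto_id (x := 𝓝 (0 : ℝ))).mul_const b).mono_left nhdsWithin_le_nhds
  refine ge_of_tendsto hlim ?_
  filter_upwards [Ioo_mem_nhdsGT one_pos] with t ht using h t ht.1 ht.2.le

theorem abs_one_sub_mul_le_max_mul {γ σ β s : ℝ} (hγ : 0 ≤ γ) (hσ : 0 ≤ σ) (hσs : σ ≤ s)
    (hsβ : s ≤ β) :
    |1 - γ * s| ≤ max ((γ * β - 1) / (γ * β + 1)) ((1 - γ * σ) / (1 + γ * σ)) * (1 + γ * s) := by
  have hs : 0 < 1 + γ * s := by nlinarith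
  rw [abs_le]
  constructor
  · have : γ * s - 1 ≤ (γ * β - 1) / (γ * β + 1) * (1 + γ * s) := by
      rw [div_mul_eq_mul_div, le_div_iff₀ (by nlinarith)]
      nlinarith
    nlinarith [mul_le_mul_of_nonneg_right (le_max_left ((γ * β - 1) / (γ * β + 1))
      ((1 - γ * σ) / (1 + γ * σ))) hs.le]
  · have : 1 - γ * s ≤ (1 - γ * σ) / (1 + γ * σ) * (1 + γ * s) := by
      rw [div_mul_eq_mul_div, le_div_iff₀ (by nlinarith)]
      nlinarith
    nlinarith [mul_le_mul_of_nonneg_right (le_max_right ((γ * β - 1) / (γ * β + 1))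
      ((1 - γ * σ) / (1 + γ * σ))) hs.le]

theorem abs_one_sub_add_mul_lt_one {α δ : ℝ} (hα : 0 < α) (hδ₀ : 0 ≤ δ) (hδ₁ : δ < 1)
    (hαδ : α < 2 / (1 + δ)) : |1 - α| + α * δ < 1 := by
  rw [lt_div_iff₀ (by linarith)] at hαδ
  rcases le_total α 1 with h | h
  · rw [abs_of_nonneg (sub_nonneg.mpr h)]
    nlinarith
  · rw [abs_of_nonpos (sub_nonpos.mpr h)]
    linarith

theorem dist_le_pow_mul_of_forall_dist_le {X : Type*} [PseudoMetricSpace X] {T : X → X}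
    {x₀ : X} {ρ : ℝ} (hρ : 0 ≤ ρ) (hT : ∀ x, dist (T x) x₀ ≤ ρ * dist x x₀) {x : ℕ → X}
    (hx : ∀ k, x (k + 1) = T (x k)) (k : ℕ) : dist (x k) x₀ ≤ ρ ^ k * dist (x 0) x₀ := by
  induction k with
  | zero => simp
  | succ k ih =>
    calc dist (x (k + 1)) x₀ ≤ ρ * dist (x k) x₀ := hx k ▸ hT (x k)
      _ ≤ ρ * (ρ ^ k * dist (x 0) x₀) := by gcongr
      _ = ρ ^ (k + 1) * dist (x 0) x₀ := by ring

section InnerProductSpace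

variable {H : Type*} [NormedAddCommGroup H] [InnerProductSpace ℝ H]

theorem eq_zero_of_forall_nonneg_inner_add_mul_norm_sq {v : H} {L : ℝ}
    (h : ∀ w, 0 ≤ ⟪v, w⟫ + L * ‖w‖ ^ 2) : v = 0 := by
  refine norm_eq_zero.mp (pow_eq_zero_iff two_ne_zero |>.mp ?_)
  refine le_antisymm (nonpos_of_forall_le_mul (b := L * ‖v‖ ^ 2) fun t ht _ => ?_) (sq_nonneg _)
  have hw := h (-t • v)
  rw [inner_smul_right, real_inner_self_eq_norm_sq, norm_smul, mul_pow, Real.norm_eq_abs,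
    sq_abs] at hw
  nlinarith

theorem norm_two_smul_sub_le {u v : H} (h : ‖u‖ ^ 2 ≤ ⟪u, v⟫) : ‖(2 : ℝ) • u - v‖ ≤ ‖v‖ := by
  refine (sq_le_sq₀ (norm_nonneg _) (norm_nonneg _)).mp ?_
  rw [norm_sub_sq_real, inner_smul_left, norm_smul]
  norm_num
  nlinarith

theorem norm_sub_sq_le_mul_inner_of_convex_of_smooth {φ : H → ℝ} {φ' : H → H} {L : ℝ}
    (hL : 0 ≤ L) (hconv : ∀ x y, φ y + ⟪φ' y, x - y⟫ ≤ φ x)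
    (hsm : ∀ x y, φ x ≤ φ y + ⟪φ' y, x - y⟫ + L / 2 * ‖x - y‖ ^ 2) (x y : H) :
    ‖φ' x - φ' y‖ ^ 2 ≤ L * ⟪φ' x - φ' y, x - y⟫ := by
  -- compare `φ` at `y - s • (φ' y - φ' x)` with its lower bound at `x` and upper bound at `y`
  have half : ∀ x y : H, ∀ s : ℝ,
      φ x + ⟪φ' x, y - x⟫ + s * (1 - L * s / 2) * ‖φ' y - φ' x‖ ^ 2 ≤ φ y := by
    intro x y s
    have hlow := hconv (y - s • (φ' y - φ' x)) x
    have hupp := hsm (y - s • (φ' y - φ' x)) y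
    rw [sub_sub_cancel_left, norm_neg, norm_smul, mul_pow, Real.norm_eq_abs, sq_abs,
      inner_neg_right, inner_smul_right] at hupp
    rw [sub_right_comm, inner_sub_right, inner_smul_right] at hlow
    have : ⟪φ' y, φ' y - φ' x⟫ - ⟪φ' x, φ' y - φ' x⟫ = ‖φ' y - φ' x‖ ^ 2 := by
      rw [← inner_sub_left, real_inner_self_eq_norm_sq]
    linear_combination hlow + hupp - s * this
  have hsum : ∀ s : ℝ, s * (2 - L * s) * ‖φ' x - φ' y‖ ^ 2 ≤ ⟪φ' x - φ' y, x - y⟫ := by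
    intro s
    have h₁ := half x y s
    have h₂ := half y x s
    rw [norm_sub_rev] at h₁
    have : ⟪φ' x - φ' y, x - y⟫ = -⟪φ' x, y - x⟫ - ⟪φ' y, x - y⟫ := by
      rw [← neg_sub x y, inner_neg_right, inner_sub_left]; ring
    nlinarith
  set A := ‖φ' x - φ' y‖ ^ 2
  set c := ⟪φ' x - φ' y, x - y⟫
  rcases hL.eq_or_lt with rfl | hL
  · rw [zero_mul]
    by_contra! hA
    have h := hsum ((c + 1) / (2 * A))
    rw [zero_mul, sub_zero, mul_assoc, div_mul_cancel₀ _ (by positivity)] at h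
    linarith
  · have h := hsum L⁻¹
    rw [mul_inv_cancel₀ hL.ne', show (2 : ℝ) - 1 = 1 by norm_num, mul_one] at h
    calc A = L * (L⁻¹ * A) := by field_simp
      _ ≤ L * c := by gcongr

theorem norm_sub_sq_add_mul_le_inner_of_strongConvex_of_smooth {f : H → ℝ} {f' : H → H}
    {σ β : ℝ} (hσβ : σ ≤ β) (hsc : ∀ x y, f x ≥ f y + ⟪f' y, x - y⟫ + σ / 2 * ‖x - y‖ ^ 2)
    (hsm : ∀ x y, f x ≤ f y + ⟪f' y, x - y⟫ + β / 2 * ‖x - y‖ ^ 2) (u v : H) :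
    ‖f' u - f' v‖ ^ 2 + σ * β * ‖u - v‖ ^ 2 ≤ (σ + β) * ⟪f' u - f' v, u - v⟫ := by
  -- `f - σ/2 ‖·‖²` is convex and `(β - σ)`-smooth
  have taylor : ∀ x y : H,
      f x - σ / 2 * ‖x‖ ^ 2 - (f y - σ / 2 * ‖y‖ ^ 2 + ⟪f' y - σ • y, x - y⟫)
        = f x - (f y + ⟪f' y, x - y⟫) - σ / 2 * ‖x - y‖ ^ 2 := by
    intro x y
    have := norm_add_sq_real y (x - y)
    rw [add_sub_cancel] at this
    rw [inner_sub_left, real_inner_smul_left, this]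
    ring
  have hco := norm_sub_sq_le_mul_inner_of_convex_of_smooth (φ := fun x => f x - σ / 2 * ‖x‖ ^ 2)
    (φ' := fun x => f' x - σ • x) (sub_nonneg.mpr hσβ)
    (fun x y => by linarith [taylor x y, hsc x y])
    (fun x y => by linarith [taylor x y, hsm x y]) u v
  rw [show f' u - σ • u - (f' v - σ • v) = (f' u - f' v) - σ • (u - v) by module] at hco
  generalize f' u - f' v = e, u - v = d at hco ⊢
  rw [norm_sub_sq_real, norm_smul, inner_sub_left, real_inner_smul_right, real_inner_smul_left,
    real_inner_self_eq_norm_sq, mul_pow, Real.norm_eq_abs, sq_abs] at hco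
  linarith

theorem norm_sub_smul_le_mul_norm_add_smul {d e : H} {σ β γ δ : ℝ} (hσ : 0 < σ) (hσβ : σ ≤ β)
    (hγ : 0 ≤ γ) (hδσ : |1 - γ * σ| ≤ δ * (1 + γ * σ)) (hδβ : |1 - γ * β| ≤ δ * (1 + γ * β))
    (h : ‖e‖ ^ 2 + σ * β * ‖d‖ ^ 2 ≤ (σ + β) * ⟪e, d⟫) : ‖d - γ • e‖ ≤ δ * ‖d + γ • e‖ := by
  have hδ : 0 ≤ δ := by nlinarith [abs_nonneg (1 - γ * σ), mul_nonneg hγ hσ.le]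
  have hσsq := pow_le_pow_left₀ (abs_nonneg _) hδσ 2
  have hβsq := pow_le_pow_left₀ (abs_nonneg _) hδβ 2
  rw [sq_abs, mul_pow] at hσsq hβsq
  refine (sq_le_sq₀ (norm_nonneg _) (by positivity)).mp ?_
  rw [mul_pow, norm_sub_sq_real, norm_add_sq_real, inner_smul_right, norm_smul, mul_pow,
    Real.norm_eq_abs, sq_abs, real_inner_comm]
  have hσβ₀ : 0 ≤ σ + β := by linarith
  have hcs : ⟪e, d⟫ ≤ ‖e‖ * ‖d‖ := real_inner_le_norm e d
  have hprod : (‖e‖ - σ * ‖d‖) * (‖e‖ - β * ‖d‖) ≤ 0 := by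
    nlinarith [mul_le_mul_of_nonneg_left hcs hσβ₀]
  have hσβd : σ * ‖d‖ ≤ β * ‖d‖ := mul_le_mul_of_nonneg_right hσβ (norm_nonneg d)
  have hlow : σ * ‖d‖ ≤ ‖e‖ := by
    by_contra! hlt
    nlinarith [mul_pos (sub_pos.mpr hlt) (by linarith : 0 < β * ‖d‖ - ‖e‖)]
  have hupp : ‖e‖ ≤ β * ‖d‖ := by
    by_contra! hlt
    nlinarith [mul_pos (sub_pos.mpr hlt) (by linarith : 0 < ‖e‖ - σ * ‖d‖)]
  -- the inequality is affine in `‖e‖ ^ 2`; at `‖e‖ = σ‖d‖` and `‖e‖ = β‖d‖` it is `hσsq` and `hβsq`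
  have key : (σ + β) * ((1 - δ ^ 2) * (‖d‖ ^ 2 + γ ^ 2 * ‖e‖ ^ 2))
      ≤ 2 * γ * (1 + δ ^ 2) * (‖e‖ ^ 2 + σ * β * ‖d‖ ^ 2) := by
    have hY₁ : σ ^ 2 * ‖d‖ ^ 2 ≤ ‖e‖ ^ 2 := by
      nlinarith [mul_le_mul hlow hlow (by positivity) (norm_nonneg e)]
    have hY₂ : ‖e‖ ^ 2 ≤ β ^ 2 * ‖d‖ ^ 2 := by
      nlinarith [mul_le_mul hupp hupp (norm_nonneg e) ((norm_nonneg e).trans hupp)]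
    rcases le_total 0 (2 * γ * (1 + δ ^ 2) - (σ + β) * (1 - δ ^ 2) * γ ^ 2) with hA | hA
    · nlinarith [mul_nonneg hA (sub_nonneg.mpr hY₁),
        mul_nonneg (mul_nonneg hσβ₀ (sq_nonneg ‖d‖)) (sub_nonneg.mpr hσsq)]
    · nlinarith [mul_nonneg_of_nonpos_of_nonpos hA (sub_nonpos.mpr hY₂),
        mul_nonneg (mul_nonneg hσβ₀ (sq_nonneg ‖d‖)) (sub_nonneg.mpr hβsq)]
  have := mul_le_mul_of_nonneg_left h (by positivity : (0 : ℝ) ≤ 2 * γ * (1 + δ ^ 2))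
  nlinarith

theorem norm_averaged_sub_le {S : H → H} {z z₀ : H} {α δ : ℝ} (hα : 0 ≤ α)
    (hS : ‖S z - z₀‖ ≤ δ * ‖z - z₀‖) :
    ‖(1 - α) • z + α • S z - z₀‖ ≤ (|1 - α| + α * δ) * ‖z - z₀‖ :=
  calc ‖(1 - α) • z + α • S z - z₀‖ = ‖(1 - α) • (z - z₀) + α • (S z - z₀)‖ := by
        congr 1; module
    _ ≤ |1 - α| * ‖z - z₀‖ + α * ‖S z - z₀‖ := by
        refine (norm_add_le _ _).trans_eq ?_
        rw [norm_smul, norm_smul, Real.norm_eq_abs, Real.norm_of_nonneg hα]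
    _ ≤ |1 - α| * ‖z - z₀‖ + α * (δ * ‖z - z₀‖) := by gcongr
    _ = (|1 - α| + α * δ) * ‖z - z₀‖ := by ring

/-- `p = prox_φ`; the proximal operator `prox_{γh}` is `IsProx (fun x => γ * h x)`. -/
def IsProx (φ : H → ℝ) (p : H → H) : Prop :=
  ∀ y x, φ (p y) + 1 / 2 * ‖p y - y‖ ^ 2 ≤ φ x + 1 / 2 * ‖x - y‖ ^ 2

namespace IsProx

variable {φ : H → ℝ} {p : H → H}

theorem add_inner_le (hp : IsProx φ p) (hφ : ConvexOn ℝ Set.univ φ) (y x : H) :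
    φ (p y) + ⟪y - p y, x - p y⟫ ≤ φ x := by
  suffices φ (p y) + ⟪y - p y, x - p y⟫ - φ x ≤ 0 by linarith
  refine nonpos_of_forall_le_mul (b := ‖x - p y‖ ^ 2 / 2) fun t ht₀ ht₁ => ?_
  have hmin := hp y (t • x + (1 - t) • p y)
  have hconv := hφ.2 (Set.mem_univ x) (Set.mem_univ (p y)) ht₀.le (sub_nonneg.mpr ht₁)
    (add_sub_cancel t 1)
  have hsq : ‖t • x + (1 - t) • p y - y‖ ^ 2
      = ‖p y - y‖ ^ 2 - 2 * t * ⟪y - p y, x - p y⟫ + t ^ 2 * ‖x - p y‖ ^ 2 := by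
    rw [show t • x + (1 - t) • p y - y = (p y - y) + t • (x - p y) by module, norm_add_sq_real,
      inner_smul_right, norm_smul, mul_pow, Real.norm_eq_abs, sq_abs,
      ← neg_sub y (p y), inner_neg_left]
    ring
  rw [hsq] at hmin
  rw [smul_eq_mul, smul_eq_mul] at hconv
  nlinarith

theorem norm_sub_sq_le_inner (hp : IsProx φ p) (hφ : ConvexOn ℝ Set.univ φ) (a b : H) :
    ‖p a - p b‖ ^ 2 ≤ ⟪p a - p b, a - b⟫ := by
  have ha := hp.add_inner_le hφ a (p b)
  have hb := hp.add_inner_le hφ b (p a)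
  have : ⟪a - p a, p b - p a⟫ + ⟪b - p b, p a - p b⟫ = ‖p a - p b‖ ^ 2 - ⟪p a - p b, a - b⟫ := by
    rw [← real_inner_self_eq_norm_sq]
    simp only [inner_sub_left, inner_sub_right, real_inner_comm]
    ring
  linarith

theorem norm_reflect_sub_le (hp : IsProx φ p)
    (hφ : ConvexOn ℝ Set.univ φ) (a b : H) :
    ‖((2 : ℝ) • p a - a) - ((2 : ℝ) • p b - b)‖ ≤ ‖a - b‖ := by
  rw [show (2 : ℝ) • p a - a - ((2 : ℝ) • p b - b) = (2 : ℝ) • (p a - p b) - (a - b) by module]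
  exact norm_two_smul_sub_le (hp.norm_sub_sq_le_inner hφ a b)

theorem sub_eq_smul_of_smooth {f : H → ℝ} {f' : H → H} {β γ : ℝ}
    (hsm : ∀ x y, f x ≤ f y + ⟪f' y, x - y⟫ + β / 2 * ‖x - y‖ ^ 2) (hγ : 0 ≤ γ)
    (hp : IsProx (fun x => γ * f x) p) (y : H) : y - p y = γ • f' (p y) := by
  suffices γ • f' (p y) + (p y - y) = 0 by rw [← sub_eq_zero, ← neg_eq_zero, ← this]; abel
  refine eq_zero_of_forall_nonneg_inner_add_mul_norm_sq (L := (γ * β + 1) / 2) fun w => ?_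
  have hmin := hp y (p y + w)
  have hup := hsm (p y + w) (p y)
  rw [add_sub_cancel_left] at hup
  rw [show p y + w - y = (p y - y) + w by abel, norm_add_sq_real] at hmin
  rw [inner_add_left, inner_smul_left]
  simp only [RCLike.conj_to_real]
  nlinarith [mul_le_mul_of_nonneg_left hup hγ]

theorem norm_reflect_sub_le_of_strongConvex_of_smooth {f : H → ℝ} {f' : H → H}
    {σ β γ δ : ℝ} (hσ : 0 < σ) (hσβ : σ ≤ β) (hγ : 0 ≤ γ)
    (hδσ : |1 - γ * σ| ≤ δ * (1 + γ * σ)) (hδβ : |1 - γ * β| ≤ δ * (1 + γ * β))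
    (hsc : ∀ x y, f x ≥ f y + ⟪f' y, x - y⟫ + σ / 2 * ‖x - y‖ ^ 2)
    (hsm : ∀ x y, f x ≤ f y + ⟪f' y, x - y⟫ + β / 2 * ‖x - y‖ ^ 2)
    (hp : IsProx (fun x => γ * f x) p) (z w : H) :
    ‖((2 : ℝ) • p z - z) - ((2 : ℝ) • p w - w)‖ ≤ δ * ‖z - w‖ := by
  have hz := hp.sub_eq_smul_of_smooth hsm hγ z
  have hw := hp.sub_eq_smul_of_smooth hsm hγ w
  have hR : (2 : ℝ) • p z - z - ((2 : ℝ) • p w - w)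
      = (p z - p w) - γ • (f' (p z) - f' (p w)) := by
    rw [smul_sub, ← hz, ← hw]; module
  have hD : z - w = (p z - p w) + γ • (f' (p z) - f' (p w)) := by
    rw [smul_sub, ← hz, ← hw]; abel
  rw [hR, hD]
  exact norm_sub_smul_le_mul_norm_add_smul hσ hσβ hγ hδσ hδβ
    (norm_sub_sq_add_mul_le_inner_of_strongConvex_of_smooth hσβ hsc hsm (p z) (p w))

end IsProx

end InnerProductSpace

theorem douglasRachford_linear_convergence_general
    {H : Type*} [NormedAddCommGroup H] [InnerProductSpace ℝ H]
    (γ β σ : ℝ) (hγ : 0 < γ) (hσ : 0 < σ) (hβσ : σ ≤ β)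
    (f : H → ℝ) (f' : H → H)
    (hsc : ∀ x y, f x ≥ f y + ⟪f' y, x - y⟫ + σ / 2 * ‖x - y‖ ^ 2)
    (hsm : ∀ x y, f x ≤ f y + ⟪f' y, x - y⟫ + β / 2 * ‖x - y‖ ^ 2)
    (g : H → ℝ) (hg_conv : ConvexOn ℝ Set.univ g)
    (pf : H → H)
    (hpf : ∀ y x, γ * f (pf y) + (1 / 2) * ‖pf y - y‖ ^ 2 ≤ γ * f x + (1 / 2) * ‖x - y‖ ^ 2)
    (pg : H → H)
    (hpg : ∀ y x, γ * g (pg y) + (1 / 2) * ‖pg y - y‖ ^ 2 ≤ γ * g x + (1 / 2) * ‖x - y‖ ^ 2)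
    (Rf : H → H) (hRf : Rf = fun x => (2 : ℝ) • pf x - x)
    (Rg : H → H) (hRg : Rg = fun x => (2 : ℝ) • pg x - x)
    (δ : ℝ) (hδ : δ = max ((γ * β - 1) / (γ * β + 1)) ((1 - γ * σ) / (1 + γ * σ)))
    (α : ℝ) (hα₁ : 0 < α) (hα₂ : α < 2 / (1 + δ))
    (T : H → H) (hT : T = fun z => (1 - α) • z + α • Rg (Rf z))
    (zbar : H) (hzbar : Rg (Rf zbar) = zbar) :
    (∀ z, ‖T z - zbar‖ ≤ (|1 - α| + α * δ) * ‖z - zbar‖)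
      ∧ |1 - α| + α * δ < 1
      ∧ ∀ z : ℕ → H, (∀ k, z (k + 1) = T (z k)) →
          ∀ k, ‖z k - zbar‖ ≤ (|1 - α| + α * δ) ^ k * ‖z 0 - zbar‖ := by
  have hγβ : 0 < γ * β := mul_pos hγ (hσ.trans_le hβσ)
  have hγσ : 0 < γ * σ := mul_pos hγ hσ
  have hδs : ∀ s, σ ≤ s → s ≤ β → |1 - γ * s| ≤ δ * (1 + γ * s) := fun s hσs hsβ =>
    hδ ▸ abs_one_sub_mul_le_max_mul hγ.le hσ.le hσs hsβ
  have hδ₀ : 0 ≤ δ :=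
    nonneg_of_mul_nonneg_left ((abs_nonneg _).trans (hδs σ le_rfl hβσ)) (by positivity)
  have hδ₁ : δ < 1 := by
    rw [hδ]
    exact max_lt ((div_lt_one (by positivity)).mpr (by linarith))
      ((div_lt_one (by positivity)).mpr (by linarith))
  have hRf' : ∀ z w, ‖Rf z - Rf w‖ ≤ δ * ‖z - w‖ := hRf ▸
    IsProx.norm_reflect_sub_le_of_strongConvex_of_smooth hσ hβσ hγ.le (hδs σ le_rfl hβσ)
      (hδs β hβσ le_rfl) hsc hsm hpf
  have hRg' : ∀ a b, ‖Rg a - Rg b‖ ≤ ‖a - b‖ :=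
    hRg ▸ IsProx.norm_reflect_sub_le (φ := fun x => γ * g x) hpg (hg_conv.smul hγ.le)
  have hcontr : ∀ z, ‖T z - zbar‖ ≤ (|1 - α| + α * δ) * ‖z - zbar‖ := fun z => by
    refine hT ▸ norm_averaged_sub_le (S := fun z => Rg (Rf z)) hα₁.le ?_
    calc ‖Rg (Rf z) - zbar‖ = ‖Rg (Rf z) - Rg (Rf zbar)‖ := by rw [hzbar]
      _ ≤ ‖Rf z - Rf zbar‖ := hRg' _ _
      _ ≤ δ * ‖z - zbar‖ := hRf' z zbar
  refine ⟨hcontr, abs_one_sub_add_mul_lt_one hα₁ hδ₀ hδ₁ hα₂, fun z hz k => ?_⟩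
  simpa only [dist_eq_norm] using dist_le_pow_mul_of_forall_dist_le (by positivity)
    (fun x => by simpa only [dist_eq_norm] using hcontr x) hz k

/-- Global linear convergence of Douglas–Rachford splitting when `f` is `σ`-strongly
convex and `β`-smooth and `g` is convex: with
`δ = max((γβ−1)/(γβ+1), (1−γσ)/(1+γσ))` and `α ∈ (0, 2/(1+δ))`, the Douglas–Rachford
operator `T = (1−α)Id + α R_g∘R_f` contracts towards any fixed point `z̄` of `R_g∘R_f`
with factor `|1−α| + αδ < 1`, and the iterates converge linearly. -/
theorem douglasRachford_linear_convergence
    {H : Type*} [NormedAddCommGroup H] [InnerProductSpace ℝ H] [CompleteSpace H]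
    (γ β σ : ℝ) (hγ : 0 < γ) (hσ : 0 < σ) (hβσ : σ ≤ β)
    (f : H → ℝ) (f' : H → H) (hf' : ∀ x, HasGradientAt f (f' x) x)
    (hsc : ∀ x y, f x ≥ f y + ⟪f' y, x - y⟫ + σ / 2 * ‖x - y‖ ^ 2)
    (hsm : ∀ x y, f x ≤ f y + ⟪f' y, x - y⟫ + β / 2 * ‖x - y‖ ^ 2)
    (g : H → ℝ) (hg_conv : ConvexOn ℝ Set.univ g) (hg_cont : Continuous g)
    (pf : H → H)
    (hpf : ∀ y x, γ * f (pf y) + (1 / 2) * ‖pf y - y‖ ^ 2 ≤ γ * f x + (1 / 2) * ‖x - y‖ ^ 2)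
    (pg : H → H)
    (hpg : ∀ y x, γ * g (pg y) + (1 / 2) * ‖pg y - y‖ ^ 2 ≤ γ * g x + (1 / 2) * ‖x - y‖ ^ 2)
    (Rf : H → H) (hRf : Rf = fun x => (2 : ℝ) • pf x - x)
    (Rg : H → H) (hRg : Rg = fun x => (2 : ℝ) • pg x - x)
    (δ : ℝ) (hδ : δ = max ((γ * β - 1) / (γ * β + 1)) ((1 - γ * σ) / (1 + γ * σ)))
    (α : ℝ) (hα₁ : 0 < α) (hα₂ : α < 2 / (1 + δ))
    (T : H → H) (hT : T = fun z => (1 - α) • z + α • Rg (Rf z))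
    (zbar : H) (hzbar : Rg (Rf zbar) = zbar) :
    (∀ z, ‖T z - zbar‖ ≤ (|1 - α| + α * δ) * ‖z - zbar‖)
      ∧ |1 - α| + α * δ < 1
      ∧ ∀ z : ℕ → H, (∀ k, z (k + 1) = T (z k)) →
          ∀ k, ‖z k - zbar‖ ≤ (|1 - α| + α * δ) ^ k * ‖z 0 - zbar‖ :=
  douglasRachford_linear_convergence_general γ β σ hγ hσ hβσ f f' hsc hsm g hg_conv pf hpf pg hpg Rf
    hRf Rg hRg δ hδ α hα₁ hα₂ T hT zbar hzbar
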